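/- arXiv:2106.00937 — 6 statements merged into one kernel-verified Lean document; each statement's English description precedes it below -/
import Mathlib

section
/- Soundness of squeezer-based verification (Theorem 1): Let TS = (Σ, Init, Tr, P) be a recidivist transition system and let ⋎ : Σ → Σ be a simulation-inducing squeezer with base B for TS. If the transition system TS_B = (Σ, Init ∩ Σ_B, Tr, P), obtained from TS by restricting the initial states to the base states Σ_B, is safe, then TS is safe. -/
/-- `TrPow Tr k σ σ'` : `σ'` is reachable from `σ` by a trace of length exactly `k`
(k-fold relational composition of `Tr`, with `TrPow Tr 0` the identity relation). -/
def TrPow {S : Type*} (Tr : S → S → Prop) : ℕ → S → S → Prop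
  | 0 => fun σ σ' => σ = σ'
  | n + 1 => fun σ σ' => ∃ σ₁, Tr σ σ₁ ∧ TrPow Tr n σ₁ σ'

/-- A transition system is safe if every state reachable (by a finite trace)
from an initial state is a good state. -/
def Safe {S : Type*} (Init : Set S) (Tr : S → S → Prop) (P : Set S) : Prop :=
  ∀ σ₀ σ, σ₀ ∈ Init → Relation.ReflTransGen Tr σ₀ σ → σ ∈ P

/-- Recidivism: bad states have successors, and transitions from bad states lead
to bad states. -/
def Recidivist {S : Type*} (Tr : S → S → Prop) (P : Set S) : Prop :=
  (∀ σ, σ ∉ P → ∃ σ', Tr σ σ') ∧ (∀ σ σ', σ ∉ P → Tr σ σ' → σ' ∉ P)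

/-- A function `f : S → S` is simulation-inducing for `(Init, Tr, P)`:
initial anchor, simulation inducing (with parameters `n_σ ≥ 1`, `m_σ ≥ 0`),
and fault preservation. -/
def SimulationInducing {S : Type*} (Init : Set S) (Tr : S → S → Prop) (P : Set S)
    (f : S → S) : Prop :=
  (∀ σ, σ ∈ Init → f σ ∈ Init) ∧
  (∀ σ, ∃ n m : ℕ, 1 ≤ n ∧ ∀ σ', TrPow Tr n σ σ' → TrPow Tr m (f σ) (f σ')) ∧
  (∀ σ, σ ∉ P → f σ ∉ P)

lemma trPow_comp {S : Type*} {Tr : S → S → Prop} :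
    ∀ (a b : ℕ) (σ σ' : S), TrPow Tr (a + b) σ σ' ↔
      ∃ μ, TrPow Tr a σ μ ∧ TrPow Tr b μ σ' := by
  intro a
  induction a with
  | zero => intro b σ σ'; simp [TrPow]
  | succ n ih =>
    intro b σ σ'
    rw [Nat.succ_add]
    show (∃ σ₁, Tr σ σ₁ ∧ TrPow Tr (n + b) σ₁ σ') ↔ _
    constructor
    · rintro ⟨σ₁, h1, h2⟩
      obtain ⟨μ, hm1, hm2⟩ := (ih b σ₁ σ').1 h2
      exact ⟨μ, ⟨σ₁, h1, hm1⟩, hm2⟩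
    · rintro ⟨μ, ⟨σ₁, h1, h2⟩, h3⟩
      exact ⟨σ₁, h1, (ih b σ₁ σ').2 ⟨μ, h2, h3⟩⟩

lemma reflTransGen_of_trPow {S : Type*} {Tr : S → S → Prop} :
    ∀ (k : ℕ) (σ σ' : S), TrPow Tr k σ σ' → Relation.ReflTransGen Tr σ σ' := by
  intro k
  induction k with
  | zero => intro σ σ' h; cases h; rfl
  | succ n ih =>
    rintro σ σ' ⟨σ₁, h1, h2⟩
    exact Relation.ReflTransGen.head h1 (ih σ₁ σ' h2)

lemma trPow_of_reflTransGen {S : Type*} {Tr : S → S → Prop} {σ σ' : S}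
    (h : Relation.ReflTransGen Tr σ σ') : ∃ k, TrPow Tr k σ σ' := by
  induction h with
  | refl => exact ⟨0, rfl⟩
  | tail hstep htr ih =>
    obtain ⟨k, hk⟩ := ih
    exact ⟨k + 1, (trPow_comp k 1 _ _).2 ⟨_, hk, _, htr, rfl⟩⟩

lemma bad_extend {S : Type*} {Tr : S → S → Prop} {P : Set S}
    (hrec : Recidivist Tr P) :
    ∀ (j : ℕ) (σ : S), σ ∉ P → ∃ τ, TrPow Tr j σ τ ∧ τ ∉ P := by
  intro j
  induction j with
  | zero => intro σ h; exact ⟨σ, rfl, h⟩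
  | succ n ih =>
    intro σ h
    obtain ⟨σ₁, h1⟩ := hrec.1 σ h
    have hb : σ₁ ∉ P := hrec.2 σ σ₁ h h1
    obtain ⟨τ, h2, h3⟩ := ih σ₁ hb
    exact ⟨τ, ⟨σ₁, h1, h2⟩, h3⟩

lemma key_step {S : Type*} {Init : Set S} {Tr : S → S → Prop} {P : Set S} {f : S → S}
    (hrec : Recidivist Tr P) (hsim : SimulationInducing Init Tr P f) :
    ∀ (k : ℕ) (σ σ' : S), TrPow Tr k σ σ' → σ' ∉ P →
      ∃ τ, Relation.ReflTransGen Tr (f σ) τ ∧ τ ∉ P := by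
  intro k
  induction k using Nat.strong_induction_on with
  | _ k ih =>
    intro σ σ' htr hbad
    obtain ⟨n, m, hn1, hsimn⟩ := hsim.2.1 σ
    rcases le_or_gt n k with hle | hlt
    · -- split the trace at n
      obtain ⟨μ, h1, h2⟩ := (trPow_comp n (k - n) σ σ').1
        (by rwa [Nat.add_sub_cancel' hle])
      have hm := hsimn μ h1
      obtain ⟨τ, hτ1, hτ2⟩ := ih (k - n) (by omega) μ σ' h2 hbad
      exact ⟨τ, (reflTransGen_of_trPow m _ _ hm).trans hτ1, hτ2⟩
    · -- extend the trace by n - k bad steps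
      obtain ⟨τ', h1, h2⟩ := bad_extend hrec (n - k) σ' hbad
      have hfull : TrPow Tr n σ τ' := by
        have : n = k + (n - k) := by omega
        rw [this]
        exact (trPow_comp k (n - k) σ τ').2 ⟨σ', htr, h1⟩
      have hm := hsimn τ' hfull
      exact ⟨f τ', reflTransGen_of_trPow m _ _ hm, hsim.2.2 τ' h2⟩

/-- **Soundness of squeezer-based verification (Theorem 1).**
If `f` is a simulation-inducing squeezer with base `B` for a recidivist transition
system `TS = (S, Init, Tr, P)`, and the system `TS_B` obtained by restricting the
initial states to the base states `Σ_B = {σ | ρ σ ∈ B}` is safe, then `TS` is safe. -/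
theorem squeezer_soundness {S X : Type*}
    (Init : Set S) (Tr : S → S → Prop) (P : Set S)
    (prec : X → X → Prop) (hwf : WellFounded prec)
    (htrans : ∀ x y z, prec x y → prec y z → prec x z)
    (B : Set X) (hmin : ∀ x : X, (∀ y, ¬ prec y x) → x ∈ B)
    (ρ : S → X) (f : S → S)
    (hsqueeze : ∀ σ, ρ σ ∉ B → prec (ρ (f σ)) (ρ σ))
    (hrec : Recidivist Tr P)
    (hsim : SimulationInducing Init Tr P f)
    (hbase_safe : ∀ σ₀ σ, σ₀ ∈ Init → ρ σ₀ ∈ B → Relation.ReflTransGen Tr σ₀ σ → σ ∈ P) :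
    Safe Init Tr P := by
  -- main claim by well-founded induction on ρ σ₀
  have main : ∀ x : X, ∀ σ₀ σ : S, ρ σ₀ = x → σ₀ ∈ Init →
      Relation.ReflTransGen Tr σ₀ σ → σ ∈ P := by
    intro x
    induction x using hwf.induction with
    | _ x ihx =>
      intro σ₀ σ hx hinit htr
      by_contra hbad
      by_cases hB : ρ σ₀ ∈ B
      · exact hbad (hbase_safe σ₀ σ hinit hB htr)
      · obtain ⟨k, hk⟩ := trPow_of_reflTransGen htr
        obtain ⟨τ, hτ1, hτ2⟩ := key_step hrec hsim k σ₀ σ hk hbad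
        have hdec : prec (ρ (f σ₀)) x := hx ▸ hsqueeze σ₀ hB
        exact hτ2 (ihx (ρ (f σ₀)) hdec (f σ₀) τ rfl (hsim.1 σ₀ hinit) hτ1)
  intro σ₀ σ hinit htr
  exact main (ρ σ₀) σ₀ σ rfl hinit htr
end

section
/- Counterexamples can be squeezed all the way to base states: Let TS = (Σ, Init, Tr, P) be a recidivist transition system and let ⋎ : Σ → Σ be a simulation-inducing squeezer with base B for TS. If there exists a counterexample trace starting from a state σ₀, then there exists k ∈ ℕ such that ρ(⋎^k(σ₀)) ∈ B and there exists a counterexample trace starting from ⋎^k(σ₀), where ⋎^k denotes the k-fold iterate of ⋎. -/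
/-- A counterexample trace starting from `σ₀`: `σ₀` is initial and some finite trace
from `σ₀` ends in a bad state. -/
def Counterexample {S : Type*} (Init : Set S) (Tr : S → S → Prop) (P : Set S)
    (σ₀ : S) : Prop :=
  σ₀ ∈ Init ∧ ∃ (n : ℕ) (σ : S), TrPow Tr n σ₀ σ ∧ σ ∉ P

/-- **Counterexamples can be squeezed all the way to base states.**
If `f` is a simulation-inducing squeezer with base `B` for a recidivist transition
system, then any counterexample trace from `σ₀` yields a `k` such that `f^[k] σ₀` is
a base state from which a counterexample trace also starts. -/
theorem counterexample_squeezed_to_base {S X : Type*}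
    (Init : Set S) (Tr : S → S → Prop) (P : Set S)
    (prec : X → X → Prop) (hwf : WellFounded prec)
    (htrans : ∀ x y z, prec x y → prec y z → prec x z)
    (B : Set X) (hmin : ∀ x : X, (∀ y, ¬ prec y x) → x ∈ B)
    (ρ : S → X) (f : S → S)
    (hsqueeze : ∀ σ, ρ σ ∉ B → prec (ρ (f σ)) (ρ σ))
    (hrec : Recidivist Tr P)
    (hsim : SimulationInducing Init Tr P f)
    (σ₀ : S) (hcex : Counterexample Init Tr P σ₀) :
    ∃ k : ℕ, ρ (f^[k] σ₀) ∈ B ∧ Counterexample Init Tr P (f^[k] σ₀) := by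
  obtain ⟨hinit, hsimstep, hfault⟩ := hsim
  obtain ⟨hsucc, hstay⟩ := hrec
  -- extension lemma
  have hext : ∀ (k : ℕ) (σ : S), σ ∉ P → ∃ σ', TrPow Tr k σ σ' ∧ σ' ∉ P := by
    intro k
    induction k with
    | zero => intro σ hσ; exact ⟨σ, rfl, hσ⟩
    | succ k ih =>
      intro σ hσ
      obtain ⟨σ₁, hσ₁⟩ := hsucc σ hσ
      obtain ⟨σ', h1, h2⟩ := ih σ₁ (hstay σ σ₁ hσ hσ₁)
      exact ⟨σ', ⟨σ₁, hσ₁, h1⟩, h2⟩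
  -- concatenation
  have hcat : ∀ (n m : ℕ) (σ σ₁ σ₂ : S), TrPow Tr n σ σ₁ → TrPow Tr m σ₁ σ₂ →
      TrPow Tr (n + m) σ σ₂ := by
    intro n
    induction n with
    | zero => intro m σ σ₁ σ₂ h1 h2; subst h1; simpa using h2
    | succ n ih =>
      intro m σ σ₁ σ₂ h1 h2
      obtain ⟨τ, hτ, h1⟩ := h1
      rw [show n + 1 + m = (n + m) + 1 by omega]
      exact ⟨τ, hτ, ih m τ σ₁ σ₂ h1 h2⟩
  -- splitting
  have hsplit : ∀ (n m : ℕ) (σ σ₂ : S), TrPow Tr (n + m) σ σ₂ →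
      ∃ σ₁, TrPow Tr n σ σ₁ ∧ TrPow Tr m σ₁ σ₂ := by
    intro n
    induction n with
    | zero => intro m σ σ₂ h; exact ⟨σ, rfl, by simpa using h⟩
    | succ n ih =>
      intro m σ σ₂ h
      rw [Nat.succ_add] at h
      obtain ⟨τ, hτ, h⟩ := h
      obtain ⟨σ₁, h1, h2⟩ := ih m τ σ₂ h
      exact ⟨σ₁, ⟨τ, hτ, h1⟩, h2⟩
  -- preservation of bad-reachability under f
  have hpres : ∀ (n : ℕ) (σ σ' : S), TrPow Tr n σ σ' → σ' ∉ P →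
      ∃ (m : ℕ) (σ'' : S), TrPow Tr m (f σ) σ'' ∧ σ'' ∉ P := by
    intro n
    induction n using Nat.strong_induction_on with
    | _ n ih =>
      intro σ σ' htr hbad
      obtain ⟨nσ, mσ, hn1, hsimσ⟩ := hsimstep σ
      by_cases hle : nσ ≤ n
      · obtain ⟨σ₁, h1, h2⟩ := hsplit nσ (n - nσ) σ σ' (by rwa [Nat.add_sub_cancel' hle])
        obtain ⟨m, σ'', h3, h4⟩ := ih (n - nσ) (by omega) σ₁ σ' h2 hbad
        exact ⟨mσ + m, σ'', hcat mσ m _ _ _ (hsimσ σ₁ h1) h3, h4⟩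
      · obtain ⟨σ'', h1, h2⟩ := hext (nσ - n) σ' hbad
        have : TrPow Tr nσ σ σ'' := by
          have := hcat n (nσ - n) σ σ' σ'' htr h1
          rwa [Nat.add_sub_cancel' (by omega)] at this
        exact ⟨mσ, f σ'', hsimσ σ'' this, hfault σ'' h2⟩
  have hcexpres : ∀ σ, Counterexample Init Tr P σ → Counterexample Init Tr P (f σ) := by
    rintro σ ⟨h0, n, σ', h1, h2⟩
    obtain ⟨m, σ'', h3, h4⟩ := hpres n σ σ' h1 h2
    exact ⟨hinit σ h0, m, σ'', h3, h4⟩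
  -- well-founded descent
  suffices h : ∀ x : X, ∀ σ : S, ρ σ = x → Counterexample Init Tr P σ →
      ∃ k : ℕ, ρ (f^[k] σ) ∈ B ∧ Counterexample Init Tr P (f^[k] σ) from
    h (ρ σ₀) σ₀ rfl hcex
  intro x
  induction x using hwf.induction with
  | _ x ih =>
    intro σ hρ hc
    by_cases hB : ρ σ ∈ B
    · exact ⟨0, hB, hc⟩
    · obtain ⟨k, hk1, hk2⟩ := ih (ρ (f σ)) (hρ ▸ hsqueeze σ hB) (f σ) rfl (hcexpres σ hc)
      exact ⟨k + 1, by rwa [Function.iterate_succ_apply], by rwa [Function.iterate_succ_apply]⟩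
end

section
/- Correctness of the is_sorted squeezer: Let α be a linear order and let l be a list over α of length n ≥ 4. Define the squeezed list l' as follows: if l[n−3] ≤ l[n−2] and l[n−2] ≤ l[n−1], then l' is l with the element at index n−1 removed; otherwise l' is l with the element at index n−4 removed. Then l is sorted in non-decreasing order if and only if l' is sorted in non-decreasing order. -/
/-- **Correctness of the `is_sorted` squeezer.**
For a list `l` of length `n ≥ 4` over a linear order, let `l'` be `l` with the
element at index `n-1` removed if `l[n-3] ≤ l[n-2]` and `l[n-2] ≤ l[n-1]`, and `l`
with the element at index `n-4` removed otherwise. Then `l` is sorted in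
non-decreasing order iff `l'` is. -/
theorem is_sorted_squeezer {α : Type*} [LinearOrder α]
    (l : List α) (n : ℕ) (hn : l.length = n) (h4 : 4 ≤ n)
    (l' : List α)
    (hl' : l' = if l.get ⟨n - 3, by omega⟩ ≤ l.get ⟨n - 2, by omega⟩ ∧
                   l.get ⟨n - 2, by omega⟩ ≤ l.get ⟨n - 1, by omega⟩
                then l.eraseIdx (n - 1) else l.eraseIdx (n - 4)) :
    List.Chain' (· ≤ ·) l ↔ List.Chain' (· ≤ ·) l' := by
  simp only [List.get_eq_getElem] at hl'
  rw [List.Chain', List.isChain_iff_getElem, List.Chain', List.isChain_iff_getElem]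
  split_ifs at hl' with h
  · obtain ⟨h1, h2⟩ := h
    subst hl'
    have hlen : (l.eraseIdx (n - 1)).length = n - 1 := by
      rw [List.length_eraseIdx_of_lt (by omega)]; omega
    constructor
    · intro H i hi
      rw [hlen] at hi
      rw [List.getElem_eraseIdx_of_lt (by omega) (by omega),
        List.getElem_eraseIdx_of_lt (by omega) (by omega)]
      exact H i (by omega)
    · intro H i hi
      rw [hn] at hi
      by_cases hc : i = n - 2
      · subst hc
        have e : n - 2 + 1 = n - 1 := by omega
        simp only [e]
        exact h2
      · have := H i (by rw [hlen]; omega)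
        rwa [List.getElem_eraseIdx_of_lt (by rw [hlen]; omega) (by omega),
          List.getElem_eraseIdx_of_lt (by rw [hlen]; omega) (by omega)] at this
  · subst hl'
    have hlen : (l.eraseIdx (n - 4)).length = n - 1 := by
      rw [List.length_eraseIdx_of_lt (by omega)]; omega
    have e1 : n - 3 + 1 = n - 2 := by omega
    have e2 : n - 2 + 1 = n - 1 := by omega
    have e3 : n - 4 + 1 = n - 3 := by omega
    constructor
    · intro H
      exfalso; apply h
      have a1 := H (n - 3) (by omega)
      have a2 := H (n - 2) (by omega)
      simp only [e1] at a1
      simp only [e2] at a2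
      exact ⟨a1, a2⟩
    · intro H
      exfalso; apply h
      have a1 := H (n - 4) (by rw [hlen]; omega)
      have a2 := H (n - 3) (by rw [hlen]; omega)
      rw [List.getElem_eraseIdx_of_ge (by rw [hlen]; omega) (by omega),
        List.getElem_eraseIdx_of_ge (by rw [hlen]; omega) (by omega)] at a1
      rw [List.getElem_eraseIdx_of_ge (by rw [hlen]; omega) (by omega),
        List.getElem_eraseIdx_of_ge (by rw [hlen]; omega) (by omega)] at a2
      simp only [e3] at a1 a2
      simp only [e1] at a1 a2
      simp only [e2] at a2
      exact ⟨a1, a2⟩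
end

section
/- Correctness of the max_ind squeezer: Let α be a linear order and let l be a list over α of length n ≥ 2. Define the squeezed list l' as follows: if l[n−2] ≤ l[n−1], then l' is l with the element at index n−2 removed; otherwise l' is l with the element at index n−1 removed. Then the maximum element of l' equals the maximum element of l (both lists are nonempty, so their maxima exist). -/
/-- **Correctness of the `max_ind` squeezer.**
For a list `l` of length `n ≥ 2` over a linear order, let `l'` be `l` with the
element at index `n-2` removed if `l[n-2] ≤ l[n-1]`, and `l` with the element at
index `n-1` removed otherwise. Then the maximum of `l'` equals the maximum of `l`. -/
theorem max_ind_squeezer {α : Type*} [LinearOrder α]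
    (l : List α) (n : ℕ) (hn : l.length = n) (h2 : 2 ≤ n)
    (l' : List α)
    (hl' : l' = if l.get ⟨n - 2, by omega⟩ ≤ l.get ⟨n - 1, by omega⟩
                then l.eraseIdx (n - 2) else l.eraseIdx (n - 1)) :
    l'.maximum = l.maximum := by
  have h2' : n - 2 < l.length := by omega
  have h1' : n - 1 < l.length := by omega
  set a := l.get ⟨n - 2, h2'⟩ with ha
  set b := l.get ⟨n - 1, h1'⟩ with hb
  set t := l.take (n - 2) with ht
  have htlen : t.length = n - 2 := by
    rw [ht, List.length_take]; omega
  have hdecomp : l = t ++ [a, b] := by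
    conv_lhs => rw [← List.take_append_drop (n - 2) l]
    congr 1
    rw [List.drop_eq_getElem_cons h2']
    have : n - 2 + 1 = n - 1 := by omega
    rw [this, List.drop_eq_getElem_cons h1']
    have : l.drop (n - 1 + 1) = [] := by
      apply List.drop_eq_nil_of_le; omega
    rw [this]
    simp [ha, hb]
  have he2 : l.eraseIdx (n - 2) = t ++ [b] := by
    rw [hdecomp, List.eraseIdx_append_of_length_le (le_of_eq htlen)]
    rw [htlen]
    simp
  have he1 : l.eraseIdx (n - 1) = t ++ [a] := by
    rw [hdecomp, List.eraseIdx_append_of_length_le (by omega : t.length ≤ n - 1)]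
    rw [htlen]
    have : n - 1 - (n - 2) = 1 := by omega
    rw [this]
    simp
  have hml : l.maximum = max t.maximum (max (a : WithBot α) b) := by
    rw [hdecomp]
    have : t ++ [a, b] = (t ++ [a]) ++ [b] := by simp
    rw [this, List.maximum_concat, List.maximum_concat, max_assoc]
  rw [hl']
  split
  · next h =>
    rw [he2, List.maximum_concat, hml]
    congr 1
    exact (max_eq_right (by exact_mod_cast h)).symm
  · next h =>
    rw [he1, List.maximum_concat, hml]
    congr 1
    exact (max_eq_left (by exact_mod_cast le_of_not_ge h)).symm
end

section
/- Correctness of the strchr squeezer: Let s be a list of integers of length ≥ 2 and let c be an integer. Define the squeezed list s' as follows: if s[0] = c or s[0] = 0, then s' is s with the element at index 1 removed; otherwise s' is s with the element at index 0 removed. Then there exists an index i < |s| with s[i] = c and s[j] ≠ 0 for all j < i, if and only if there exists an index i < |s'| with s'[i] = c and s'[j] ≠ 0 for all j < i. -/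
/-- **Correctness of the `strchr` squeezer.**
For a list `s` of integers of length ≥ 2 and an integer `c`, let `s'` be `s` with
the element at index 1 removed if `s[0] = c` or `s[0] = 0`, and `s` with the element
at index 0 removed otherwise. Then `c` occurs in `s` before any occurrence of the
terminator `0` iff the same holds for `s'`. -/
theorem strchr_squeezer (s : List ℤ) (h2 : 2 ≤ s.length) (c : ℤ)
    (s' : List ℤ)
    (hs' : s' = if s.get ⟨0, by omega⟩ = c ∨ s.get ⟨0, by omega⟩ = 0
                then s.eraseIdx 1 else s.eraseIdx 0) :
    (∃ (i : ℕ) (hi : i < s.length),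
        s.get ⟨i, hi⟩ = c ∧ ∀ (j : ℕ) (hj : j < i), s.get ⟨j, by omega⟩ ≠ 0) ↔
    (∃ (i : ℕ) (hi : i < s'.length),
        s'.get ⟨i, hi⟩ = c ∧ ∀ (j : ℕ) (hj : j < i), s'.get ⟨j, by omega⟩ ≠ 0) := by
  obtain ⟨a, b, t, rfl⟩ : ∃ a b t, s = a :: b :: t := by
    match s, h2 with
    | a :: b :: t, _ => exact ⟨a, b, t, rfl⟩
  simp only [List.get] at hs'
  by_cases hac : a = c
  · rw [if_pos (Or.inl hac)] at hs'
    subst hs'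
    constructor
    · intro _
      exact ⟨0, by simp, hac, fun j hj => by omega⟩
    · intro _
      exact ⟨0, by simp, hac, fun j hj => by omega⟩
  · by_cases ha0 : a = 0
    · rw [if_pos (Or.inr ha0)] at hs'
      subst hs'
      constructor
      · rintro ⟨i, hi, hc, hz⟩
        cases i with
        | zero => exact absurd hc hac
        | succ k => exact absurd ha0 (hz 0 (by omega))
      · rintro ⟨i, hi, hc, hz⟩
        cases i with
        | zero => exact absurd hc hac
        | succ k => exact absurd ha0 (hz 0 (by omega))
    · rw [if_neg (by tauto)] at hs'
      subst hs'
      constructor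
      · rintro ⟨i, hi, hc, hz⟩
        cases i with
        | zero => exact absurd hc hac
        | succ k =>
          exact ⟨k, by simpa using hi, hc, fun j hj => hz (j + 1) (by omega)⟩
      · rintro ⟨i, hi, hc, hz⟩
        refine ⟨i + 1, by simpa using hi, hc, fun j hj => ?_⟩
        cases j with
        | zero => exact ha0
        | succ k => exact hz k (by omega)
end

section
/- Correctness of the strncmp squeezer: Let s1 and s2 be lists of integers of the same length n ≥ 2. Define Q(s1, s2) to hold if and only if for every i < n, if s1[j] ≠ 0 for all j < i, then s1[i] = s2[i]. Define the squeezed pair (s1', s2') as follows: if s1[0] = s2[0] and s1[0] ≠ 0, then s1' and s2' are s1 and s2 with their elements at index 0 removed; otherwise s1' and s2' are s1 and s2 with their elements at index 1 removed. Then Q(s1, s2) holds if and only if Q(s1', s2') holds. -/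
/-- `Q s1 s2`: for every position `i` (valid in both lists), if all entries of `s1`
before `i` are nonzero, then `s1` and `s2` agree at `i`. This expresses that the two
strings agree up to and including the first occurrence of the terminator `0` in
`s1`, i.e. the condition under which the C function `strncmp` returns 0. -/
def Q (s1 s2 : List ℤ) : Prop :=
  ∀ (i : ℕ) (hi : i < s1.length) (hi' : i < s2.length),
    (∀ (j : ℕ) (hj : j < i), s1.get ⟨j, by omega⟩ ≠ 0) →
    s1.get ⟨i, hi⟩ = s2.get ⟨i, hi'⟩

lemma Q_cons (a c : ℤ) (l1 l2 : List ℤ) (ha : a ≠ 0) :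
    Q (a::l1) (c::l2) ↔ a = c ∧ Q l1 l2 := by
  constructor
  · intro h
    refine ⟨h 0 (by simp) (by simp) (by omega), ?_⟩
    intro i hi hi' hpre
    have := h (i+1) (by simpa using Nat.succ_lt_succ hi)
      (by simpa using Nat.succ_lt_succ hi') ?_
    · simpa using this
    · intro j hj
      cases j with
      | zero => simpa using ha
      | succ k => simpa using hpre k (by omega)
  · rintro ⟨hac, h⟩ i hi hi' hpre
    cases i with
    | zero => simpa using hac
    | succ k =>
      have := h k (by simpa using hi) (by simpa using hi') ?_
      · simpa using this
      · intro j hj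
        simpa using hpre (j+1) (by omega)

lemma Q_cons_zero (c : ℤ) (l1 l2 : List ℤ) :
    Q (0::l1) (c::l2) ↔ (0 : ℤ) = c := by
  constructor
  · intro h
    simpa using h 0 (by simp) (by simp) (by omega)
  · intro hc i hi hi' hpre
    cases i with
    | zero => simpa using hc
    | succ k =>
      exact absurd (by simp : ((0:ℤ)::l1).get ⟨0, by simp⟩ = 0) (hpre 0 (by omega))

/-- **Correctness of the `strncmp` squeezer.**
For lists `s1, s2` of integers of the same length `n ≥ 2`, remove the elements at
index 0 from both if `s1[0] = s2[0]` and `s1[0] ≠ 0`, otherwise remove the elements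
at index 1 from both. Then `Q s1 s2` holds iff `Q s1' s2'` holds. -/
theorem strncmp_squeezer (s1 s2 : List ℤ) (n : ℕ)
    (h1 : s1.length = n) (h2 : s2.length = n) (hn : 2 ≤ n)
    (s1' s2' : List ℤ)
    (hsq : (s1', s2') =
      if s1.get ⟨0, by omega⟩ = s2.get ⟨0, by omega⟩ ∧ s1.get ⟨0, by omega⟩ ≠ 0
      then (s1.eraseIdx 0, s2.eraseIdx 0)
      else (s1.eraseIdx 1, s2.eraseIdx 1)) :
    Q s1 s2 ↔ Q s1' s2' := by
  match s1, s2 with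
  | a::b::t1, c::d::t2 =>
    simp only [List.get] at hsq
    by_cases hcond : a = c ∧ a ≠ 0
    · rw [if_pos hcond] at hsq
      obtain ⟨e1, e2⟩ := Prod.mk.injEq .. ▸ hsq
      simp only [List.eraseIdx] at e1 e2
      subst e1 e2
      rw [Q_cons a c _ _ hcond.2]
      exact ⟨fun h => h.2, fun h => ⟨hcond.1, h⟩⟩
    · rw [if_neg hcond] at hsq
      obtain ⟨e1, e2⟩ := Prod.mk.injEq .. ▸ hsq
      simp only [List.eraseIdx] at e1 e2
      subst e1 e2
      by_cases hac : a = c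
      · have ha : a = 0 := by tauto
        subst ha
        rw [Q_cons_zero, Q_cons_zero]
      · constructor
        · intro h
          exact absurd (by simpa using h 0 (by simp) (by simp) (by omega)) hac
        · intro h
          exact absurd (by simpa using h 0 (by simp) (by simp) (by omega)) hac
end
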